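/- For any two manipulation relations → and ⇝, any distribution P on X × {0,1}, and any h ∈ H, the expected strategic loss under → is bounded above by twice the expected strategic loss under ⇝ plus d_{H,P_X}(→,⇝): L→_P(h) ≤ 2·L⇝_P(h) + d_{H,P_X}(→,⇝). -/

import Mathlib

open MeasureTheory

open Classical in
noncomputable def l01 {X : Type*} (h : X → Bool) (x : X) (y : Bool) : ℝ :=
  if h x ≠ y then 1 else 0

open Classical in
noncomputable def lsc {X : Type*} (R : X → X → Prop) (h : X → Bool) (x : X) : ℝ :=
  if h x = false ∧ ∃ x', R x x' ∧ h x' = true then 1 else 0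

open Classical in
noncomputable def lstr {X : Type*} (R : X → X → Prop) (h : X → Bool) (x : X) (y : Bool) : ℝ :=
  if h x ≠ y ∨ (h x = false ∧ ∃ x', R x x' ∧ h x' = true) then 1 else 0

def lossSet01 {X : Type*} (h : X → Bool) : Set (X × Bool) := {p | h p.1 ≠ p.2}

def lossSetSc {X : Type*} (R : X → X → Prop) (h : X → Bool) : Set (X × Bool) :=
  {p | h p.1 = false ∧ ∃ x', R p.1 x' ∧ h x' = true}

def lossSetStr {X : Type*} (R : X → X → Prop) (h : X → Bool) : Set (X × Bool) :=
  {p | h p.1 ≠ p.2 ∨ (h p.1 = false ∧ ∃ x', R p.1 x' ∧ h x' = true)}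

def graphOf {X : Type*} (h : X → Bool) : Set (X × Bool) := {p | p.2 = h p.1}

def Shatters {Z : Type*} (U : Set (Set Z)) (S : Finset Z) : Prop :=
  ∀ T ⊆ S, ∃ u ∈ U, ∀ z ∈ S, (z ∈ u ↔ z ∈ T)

noncomputable def vcDim {Z : Type*} (U : Set (Set Z)) : ℕ∞ :=
  ⨆ (S : Finset Z) (_ : Shatters U S), (S.card : ℕ∞)

def ShattersF {X : Type*} (H : Set (X → Bool)) (S : Finset X) : Prop :=
  ∀ f : X → Bool, ∃ h ∈ H, ∀ x ∈ S, h x = f x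

noncomputable def vcDimF {X : Type*} (H : Set (X → Bool)) : ℕ∞ :=
  ⨆ (S : Finset X) (_ : ShattersF H S), (S.card : ℕ∞)

noncomputable def sLoss {X : Type*} [MeasurableSpace X] (P : Measure (X × Bool))
    (R : X → X → Prop) (h : X → Bool) : ℝ := ∫ p, lstr R h p.1 p.2 ∂P

noncomputable def bLoss {X : Type*} [MeasurableSpace X] (P : Measure (X × Bool))
    (h : X → Bool) : ℝ := ∫ p, l01 h p.1 p.2 ∂P

noncomputable def scLoss {X : Type*} [MeasurableSpace X] (PX : Measure X)
    (R : X → X → Prop) (h : X → Bool) : ℝ := ∫ x, lsc R h x ∂PX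

noncomputable def gdist {X : Type*} [MeasurableSpace X] (H : Set (X → Bool))
    (PX : Measure X) (R R' : X → X → Prop) : ℝ :=
  ⨆ h : H, ∫ x, |lsc R h.1 x - lsc R' h.1 x| ∂PX

open Classical in
noncomputable def lgr {X : Type*} (h : X → Bool) (R' : X → X → Prop) (x : X) (B : Set X) : ℝ :=
  if (h x = false ∧ (∃ x' ∈ B, h x' = true) ∧ (∀ x'', R' x x'' → h x'' = false)) ∨
     (h x = false ∧ (∀ x' ∈ B, h x' = false) ∧ (∃ x'', R' x x'' ∧ h x'' = true)) then 1 else 0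

def grLossSet {X : Type*} (h : X → Bool) (R' : X → X → Prop) : Set (X × Set X) :=
  {p | lgr h R' p.1 p.2 = 1}

/-! Pointwise, `ℓ→ ≤ ℓ01 + ℓ⊥→ ≤ ℓ01 + ℓ⊥⇝ + |ℓ⊥→ - ℓ⊥⇝| ≤ 2 ℓ⇝ + |ℓ⊥→ - ℓ⊥⇝|`, since both
`ℓ01` and `ℓ⊥⇝` are bounded by `ℓ⇝`. Integrating against `P`, the last term depends on `x`
only, so its expectation is taken under `P_X` and is at most `d_{H,P_X}(→,⇝)` because `h ∈ H`. -/

section PointwiseLosses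

variable {X : Type*} (R R' : X → X → Prop) (h : X → Bool) (x : X) (y : Bool)

lemma lsc_nonneg : 0 ≤ lsc R h x := by
  unfold lsc; split_ifs <;> norm_num

lemma lsc_le_one : lsc R h x ≤ 1 := by
  unfold lsc; split_ifs <;> norm_num

lemma lstr_nonneg : 0 ≤ lstr R h x y := by
  unfold lstr; split_ifs <;> norm_num

lemma lstr_le_one : lstr R h x y ≤ 1 := by
  unfold lstr; split_ifs <;> norm_num

lemma abs_sub_lsc_le_one : |lsc R h x - lsc R' h x| ≤ 1 :=
  abs_sub_le_iff.2
    ⟨by linarith [lsc_le_one R h x, lsc_nonneg R' h x],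
     by linarith [lsc_le_one R' h x, lsc_nonneg R h x]⟩

lemma lstr_le_l01_add_lsc : lstr R h x y ≤ l01 h x y + lsc R h x := by
  unfold lstr l01 lsc; split_ifs <;> simp_all

lemma l01_le_lstr : l01 h x y ≤ lstr R h x y := by
  unfold lstr l01; split_ifs <;> simp_all

lemma lsc_le_lstr : lsc R h x ≤ lstr R h x y := by
  unfold lstr lsc; split_ifs <;> simp_all

lemma lstr_le_two_mul_lstr_add_abs_sub_lsc :
    lstr R h x y ≤ 2 * lstr R' h x y + |lsc R h x - lsc R' h x| :=
  calc lstr R h x y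
      ≤ l01 h x y + lsc R h x := lstr_le_l01_add_lsc R h x y
    _ ≤ l01 h x y + lsc R' h x + |lsc R h x - lsc R' h x| := by
        linarith [le_abs_self (lsc R h x - lsc R' h x)]
    _ ≤ 2 * lstr R' h x y + |lsc R h x - lsc R' h x| := by
        linarith [l01_le_lstr R' h x y, lsc_le_lstr R' h x y]

end PointwiseLosses

open Set in
lemma integral_abs_sub_lsc_le_gdist {X : Type*} [MeasurableSpace X] {H : Set (X → Bool)}
    (PX : Measure X) [IsFiniteMeasure PX] (R R' : X → X → Prop) {h : X → Bool} (hH : h ∈ H) :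
    ∫ x, |lsc R h x - lsc R' h x| ∂PX ≤ gdist H PX R R' := by
  refine le_ciSup (f := fun g : H => ∫ x, |lsc R g.1 x - lsc R' g.1 x| ∂PX)
    ⟨1 * PX.real univ, ?_⟩ ⟨h, hH⟩
  rintro _ ⟨g, rfl⟩
  calc ∫ x, |lsc R g.1 x - lsc R' g.1 x| ∂PX
      ≤ ‖∫ x, |lsc R g.1 x - lsc R' g.1 x| ∂PX‖ := Real.le_norm_self _
    _ ≤ 1 * PX.real univ := norm_integral_le_of_norm_le_const (ae_of_all _ fun x => by
        simpa only [Real.norm_eq_abs, abs_abs] using abs_sub_lsc_le_one R R' g.1 x)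

lemma sLoss_le_two_mul_sLoss_add_integral_abs_sub_lsc {X : Type*} [MeasurableSpace X]
    (P : Measure (X × Bool)) [IsFiniteMeasure P] (R R' : X → X → Prop) (h : X → Bool)
    (hm : Measurable (lsc R h)) (hm' : Measurable (lsc R' h))
    (hms' : Measurable (fun p : X × Bool => lstr R' h p.1 p.2)) :
    sLoss P R h ≤
      2 * sLoss P R' h + ∫ x, |lsc R h x - lsc R' h x| ∂(P.map Prod.fst) := by
  have hdiff : Measurable (fun x => |lsc R h x - lsc R' h x|) := (hm.sub hm').abs
  have hint' : Integrable (fun p : X × Bool => lstr R' h p.1 p.2) P :=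
    .of_bound hms'.aestronglyMeasurable 1 (ae_of_all _ fun p => by
      rw [Real.norm_eq_abs, abs_of_nonneg (lstr_nonneg R' h p.1 p.2)]
      exact lstr_le_one R' h p.1 p.2)
  have hintDiff : Integrable (fun p : X × Bool => |lsc R h p.1 - lsc R' h p.1|) P :=
    .of_bound (hdiff.comp measurable_fst).aestronglyMeasurable 1
      (ae_of_all _ fun p => by
        simpa only [Real.norm_eq_abs, abs_abs] using abs_sub_lsc_le_one R R' h p.1)
  rw [integral_map measurable_fst.aemeasurable hdiff.aestronglyMeasurable, sLoss, sLoss,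
    ← integral_const_mul, ← integral_add (hint'.const_mul 2) hintDiff]
  exact integral_mono_of_nonneg (ae_of_all _ fun p => lstr_nonneg R h p.1 p.2)
    ((hint'.const_mul 2).add hintDiff)
    (ae_of_all _ fun p => lstr_le_two_mul_lstr_add_abs_sub_lsc R R' h p.1 p.2)

theorem stmt8_general {X : Type*} [MeasurableSpace X] (P : Measure (X × Bool))
    [IsProbabilityMeasure P] (H : Set (X → Bool)) (R R' : X → X → Prop)
    (h : X → Bool) (hH : h ∈ H)
    (hm : ∀ g ∈ H, Measurable (lsc R g)) (hm' : ∀ g ∈ H, Measurable (lsc R' g))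
    (hms' : Measurable (fun p : X × Bool => lstr R' h p.1 p.2)) :
    sLoss P R h ≤ 2 * sLoss P R' h + gdist H (P.map Prod.fst) R R' := by
  calc sLoss P R h
      ≤ 2 * sLoss P R' h + ∫ x, |lsc R h x - lsc R' h x| ∂(P.map Prod.fst) :=
        sLoss_le_two_mul_sLoss_add_integral_abs_sub_lsc P R R' h (hm h hH) (hm' h hH) hms'
    _ ≤ 2 * sLoss P R' h + gdist H (P.map Prod.fst) R R' := by
        gcongr
        exact integral_abs_sub_lsc_le_gdist _ R R' hH

theorem stmt8 {X : Type*} [MeasurableSpace X] (P : Measure (X × Bool))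
    [IsProbabilityMeasure P] (H : Set (X → Bool)) (R R' : X → X → Prop)
    (h : X → Bool) (hH : h ∈ H)
    (hm : ∀ g ∈ H, Measurable (lsc R g)) (hm' : ∀ g ∈ H, Measurable (lsc R' g))
    (hms : Measurable (fun p : X × Bool => lstr R h p.1 p.2))
    (hms' : Measurable (fun p : X × Bool => lstr R' h p.1 p.2))
    (hmb : Measurable (fun p : X × Bool => l01 h p.1 p.2)) :
    sLoss P R h ≤ 2 * sLoss P R' h + gdist H (P.map Prod.fst) R R' :=
  stmt8_general P H R R' h hH hm hm' hms'
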